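/- Every homomorphism of R-bimodules from R to the transposition bimodule R̲ is zero. Concretely: if ξ : R → R is an additive map satisfying ξ(r·m) = r·ξ(m) and ξ(m·r) = ξ(m)·s(r) for all r, m ∈ R (i.e. ξ is an R-bimodule map from R to R̲, where R̲ has underlying k-module R, the ordinary left multiplication action, and right action twisted by s), then ξ = 0. -/

import Mathlib

/-- The anticommutation relation `x₁x₂ + x₂x₁ = 0` on the free `k`-algebra
on two generators. -/
inductive OddRel (k : Type*) [CommRing k] :
    FreeAlgebra k (Fin 2) → FreeAlgebra k (Fin 2) → Prop
  | anticomm : OddRel k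
      (FreeAlgebra.ι k (0 : Fin 2) * FreeAlgebra.ι k (1 : Fin 2) +
        FreeAlgebra.ι k (1 : Fin 2) * FreeAlgebra.ι k (0 : Fin 2)) 0

/-- The `k`-algebra of skew polynomials in two variables,
`R = k⟨x₁,x₂⟩/(x₁x₂ + x₂x₁)`. -/
abbrev OddPoly (k : Type*) [CommRing k] := RingQuot (OddRel k)

/-- The generators `x₁ = X k 0` and `x₂ = X k 1` of `R`. -/
noncomputable def X (k : Type*) [CommRing k] (i : Fin 2) : OddPoly k :=
  RingQuot.mkAlgHom k (OddRel k) (FreeAlgebra.ι k i)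

/-!
A bimodule map `ξ : R → R̲` is right multiplication by `c = ξ 1`, and comparing `ξ (x₁ · 1)`
with `ξ (1 · x₁)` gives `x₁ c + c x₂ = 0`. To see that this forces `c = 0`, let `R` act on
`k[a][b]`, with `x₁ⁱ x₂ʲ` corresponding to `aⁱ bʲ`: then `x₁` acts as multiplication by `a`,
`x₂` as multiplication by `b` after substituting `a ↦ -a` (since `x₂ x₁ⁱ = (-x₁)ⁱ x₂`), and right
multiplication by `x₂` becomes multiplication by `b`. Applied to `1`, the relation reads
`(b + a) v = 0` with `v = c · 1`; as `b + a` is monic in `b`, `v = 0`, and `c` is recovered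
from `v` by reading `aⁱ bʲ` back as `x₁ⁱ x₂ʲ`.
-/

open Polynomial (aeval C monomial)

namespace OddPoly

variable {k : Type*} [CommRing k]

theorem X_zero_mul_X_one_add_X_one_mul_X_zero : X k 0 * X k 1 + X k 1 * X k 0 = 0 := by
  simpa [X] using RingQuot.mkAlgHom_rel k (OddRel.anticomm (k := k))

theorem semiconjBy_X_one_X_zero : SemiconjBy (X k 1) (X k 0) (-X k 0) := by
  rw [SemiconjBy, neg_mul (X k 0), eq_neg_iff_add_eq_zero, add_comm]
  exact X_zero_mul_X_one_add_X_one_mul_X_zero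

theorem X_one_mul_aeval (p : Polynomial k) :
    X k 1 * aeval (X k 0) p = aeval (-X k 0) p * X k 1 := by
  induction p using Polynomial.induction_on' with
  | add p q hp hq => rw [map_add, map_add, mul_add, add_mul, hp, hq]
  | monomial n c =>
    simp only [Polynomial.aeval_monomial]
    exact SemiconjBy.mul_right (Algebra.commute_algebraMap_right c (X k 1))
      (semiconjBy_X_one_X_zero.pow_right n)

theorem induction_on {C : OddPoly k → Prop} (r : OddPoly k)
    (algebraMap : ∀ c : k, C (algebraMap k (OddPoly k) c))
    (X_zero : C (X k 0)) (X_one : C (X k 1))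
    (mul : ∀ a b, C a → C b → C (a * b))
    (add : ∀ a b, C a → C b → C (a + b)) : C r := by
  obtain ⟨a, rfl⟩ := RingQuot.mkAlgHom_surjective k (OddRel k) r
  induction a using FreeAlgebra.induction with
  | grade0 c => rw [AlgHom.commutes]; exact algebraMap c
  | grade1 i => fin_cases i <;> assumption
  | mul a b ha hb => rw [map_mul]; exact mul _ _ ha hb
  | add a b ha hb => rw [map_add]; exact add _ _ ha hb

noncomputable def xOneAction : Module.End k (Polynomial (Polynomial k)) :=
  LinearMap.mulLeft k Polynomial.X ∘ₗ (Polynomial.mapAlgHom (aeval (-Polynomial.X))).toLinearMap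

theorem xOneAction_apply (f : Polynomial (Polynomial k)) :
    xOneAction f = Polynomial.X * f.map (aeval (-Polynomial.X : Polynomial k)).toRingHom := rfl

noncomputable def rep : OddPoly k →ₐ[k] Module.End k (Polynomial (Polynomial k)) :=
  RingQuot.liftAlgHom k
    ⟨FreeAlgebra.lift k ![LinearMap.mulLeft k (C Polynomial.X), xOneAction], by
      rintro _ _ ⟨⟩
      ext f : 1
      simp [xOneAction_apply]
      ring⟩

@[simp] theorem rep_X_zero : rep (X k 0) = LinearMap.mulLeft k (C Polynomial.X) := by
  simp [rep, X]

@[simp] theorem rep_X_one : rep (X k 1) = xOneAction := by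
  simp [rep, X]

noncomputable def ofNormalForm : Polynomial (Polynomial k) →ₗ[k] OddPoly k :=
  Polynomial.lsum fun n => LinearMap.mulRight k (X k 1 ^ n) ∘ₗ (aeval (X k 0)).toLinearMap

theorem ofNormalForm_monomial (n : ℕ) (p : Polynomial k) :
    ofNormalForm (monomial n p) = aeval (X k 0) p * X k 1 ^ n := by
  simp [ofNormalForm]

theorem rep_apply_X_mul (r : OddPoly k) (f : Polynomial (Polynomial k)) :
    rep r (Polynomial.X * f) = Polynomial.X * rep r f := by
  induction r using induction_on generalizing f with
  | algebraMap c => simp [Module.algebraMap_end_apply]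
  | X_zero => simp [mul_left_comm]
  | X_one => simp [xOneAction_apply]
  | mul a b ha hb => rw [map_mul rep, Module.End.mul_apply, Module.End.mul_apply, hb, ha]
  | add a b ha hb => rw [map_add, LinearMap.add_apply, LinearMap.add_apply, ha, hb, mul_add]

theorem ofNormalForm_C_X_mul (f : Polynomial (Polynomial k)) :
    ofNormalForm (C Polynomial.X * f) = X k 0 * ofNormalForm f := by
  induction f using Polynomial.induction_on' with
  | add f g hf hg => rw [mul_add, map_add, map_add, hf, hg, mul_add]
  | monomial n p =>
    rw [Polynomial.C_mul_monomial, ofNormalForm_monomial, ofNormalForm_monomial, map_mul,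
      Polynomial.aeval_X, mul_assoc]

theorem ofNormalForm_xOneAction (f : Polynomial (Polynomial k)) :
    ofNormalForm (xOneAction f) = X k 1 * ofNormalForm f := by
  induction f using Polynomial.induction_on' with
  | add f g hf hg => rw [map_add, map_add, hf, hg, map_add, mul_add]
  | monomial n p =>
    rw [xOneAction_apply, Polynomial.map_monomial, Polynomial.X_mul_monomial, ofNormalForm_monomial,
      ofNormalForm_monomial, ← mul_assoc, X_one_mul_aeval, mul_assoc, ← pow_succ',
      AlgHom.toRingHom_eq_coe, RingHom.coe_coe, ← Polynomial.aeval_algHom_apply, map_neg,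
      Polynomial.aeval_X]

theorem ofNormalForm_rep_apply (r : OddPoly k) (f : Polynomial (Polynomial k)) :
    ofNormalForm (rep r f) = r * ofNormalForm f := by
  induction r using induction_on generalizing f with
  | algebraMap c =>
    rw [AlgHom.commutes, Module.algebraMap_end_apply, map_smul, Algebra.smul_def]
  | X_zero => rw [rep_X_zero, LinearMap.mulLeft_apply, ofNormalForm_C_X_mul]
  | X_one => rw [rep_X_one, ofNormalForm_xOneAction]
  | mul a b ha hb => rw [map_mul rep, Module.End.mul_apply, ha, hb, mul_assoc]
  | add a b ha hb => rw [map_add, LinearMap.add_apply, map_add, ha, hb, add_mul]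

theorem ofNormalForm_rep_apply_one (r : OddPoly k) : ofNormalForm (rep r 1) = r := by
  rw [ofNormalForm_rep_apply, ← Polynomial.monomial_zero_one, ofNormalForm_monomial, map_one,
    pow_zero, mul_one, mul_one]

theorem eq_zero_of_X_zero_mul_add_mul_X_one_eq_zero {c : OddPoly k}
    (h : X k 0 * c + c * X k 1 = 0) : c = 0 := by
  have hv : (Polynomial.X + C Polynomial.X) * rep c 1 = 0 := by
    have hX : xOneAction (1 : Polynomial (Polynomial k)) = Polynomial.X * 1 := by
      simp [xOneAction_apply]
    have := congrArg (rep · 1) h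
    simp only [map_add, map_mul rep, map_zero, LinearMap.add_apply, Module.End.mul_apply,
      rep_X_zero, rep_X_one, hX, rep_apply_X_mul, LinearMap.mulLeft_apply,
      LinearMap.zero_apply] at this
    rwa [add_mul, add_comm]
  have hmonic := Polynomial.monic_X_add_C (Polynomial.X : Polynomial k)
  rw [← ofNormalForm_rep_apply_one c, hmonic.mul_right_eq_zero_iff.mp hv, map_zero]

end OddPoly

theorem stmt13_general (k : Type*) [CommRing k]
    (s : OddPoly k ≃ₐ[k] OddPoly k)
    (hs1 : s (X k 0) = - X k 1)
 :
    ∀ ξ : OddPoly k →+ OddPoly k,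
      (∀ r m : OddPoly k, ξ (r * m) = r * ξ m) →
      (∀ m r : OddPoly k, ξ (m * r) = ξ m * s r) →
      ξ = 0 := by
  intro ξ hL hR
  have hξ : ∀ m, ξ m = m * ξ 1 := fun m => by rw [← hL, mul_one]
  have hc : X k 0 * ξ 1 + ξ 1 * X k 1 = 0 := by
    rw [← hξ, ← one_mul (X k 0), hR, hs1, ← mul_add, neg_add_cancel, mul_zero]
  ext m
  rw [hξ, OddPoly.eq_zero_of_X_zero_mul_add_mul_X_one_eq_zero hc, mul_zero,
    AddMonoidHom.zero_apply]

/-- Every `R`-bimodule homomorphism from `R` to the transposition bimodule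
`R̲` is zero: if `ξ : R → R` is additive with `ξ(r·m) = r·ξ(m)` and
`ξ(m·r) = ξ(m)·s(r)`, then `ξ = 0`. -/
theorem stmt13 (k : Type*) [CommRing k]
    (s : OddPoly k ≃ₐ[k] OddPoly k)
    (hs1 : s (X k 0) = - X k 1) (hs2 : s (X k 1) = - X k 0)
 :
    ∀ ξ : OddPoly k →+ OddPoly k,
      (∀ r m : OddPoly k, ξ (r * m) = r * ξ m) →
      (∀ m r : OddPoly k, ξ (m * r) = ξ m * s r) →
      ξ = 0 :=
  stmt13_general k s hs1
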